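/- Let f : K → L be a continuous surjective homomorphism of compact Hausdorff abelian groups and let G be a locally essential subgroup of L. Then f⁻¹(G) is a locally essential subgroup of K. If moreover G is dense in L, then f⁻¹(G) is dense in K. -/

import Mathlib

open Filter Topology Set

universe u

/-- A (Hausdorff) topological abelian group is *minimal* if its topology admits no strictly
coarser Hausdorff group topology; equivalently, every continuous group isomorphism onto a
Hausdorff topological group is open. -/
def IsMinimalGroup (G : Type*) [AddGroup G] [t : TopologicalSpace G] : Prop :=
  ∀ t' : TopologicalSpace G, t ≤ t' →
    @IsTopologicalAddGroup G t' _ → @T2Space G t' → t' = t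

/-- A topological abelian group is *locally minimal* if there is a neighbourhood `V` of `0`
such that every coarser Hausdorff group topology in which `V` is still a neighbourhood of `0`
coincides with the original topology; equivalently, there is a neighbourhood `V` of the
identity such that every continuous group isomorphism `f` onto a Hausdorff topological group
with `f(V)` a neighbourhood of the identity is open. -/
def IsLocallyMinimalGroup (G : Type*) [AddGroup G] [t : TopologicalSpace G] : Prop :=
  ∃ V ∈ @nhds G t 0, ∀ t' : TopologicalSpace G, t ≤ t' →
    @IsTopologicalAddGroup G t' _ → @T2Space G t' → V ∈ @nhds G t' 0 → t' = t

/-- A uniform space is *sequentially complete* if every Cauchy sequence converges. -/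
def SeqComplete (G : Type*) [UniformSpace G] : Prop :=
  ∀ u : ℕ → G, CauchySeq u → ∃ x : G, Tendsto u atTop (nhds x)

/-- The topological weight: the least cardinality of a base of open sets. -/
noncomputable def tweight (X : Type u) [TopologicalSpace X] : Cardinal.{u} :=
  ⨅ b : {s : Set (Set X) // TopologicalSpace.IsTopologicalBasis s}, Cardinal.mk b.1
/-- A subgroup `H` is *essential* if it meets every non-trivial closed subgroup
non-trivially. -/
def IsEssential {G : Type*} [AddGroup G] [TopologicalSpace G] (H : AddSubgroup G) : Prop :=
  ∀ N : AddSubgroup G, IsClosed (N : Set G) → N ≠ ⊥ → H ⊓ N ≠ ⊥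

/-- A subgroup `H` is *locally essential* if there is a neighbourhood `V` of `0` such that
`H` meets non-trivially every non-trivial closed subgroup contained in `V`. -/
def IsLocallyEssential {G : Type*} [AddGroup G] [TopologicalSpace G] (H : AddSubgroup G) :
    Prop :=
  ∃ V ∈ nhds (0 : G), ∀ N : AddSubgroup G, IsClosed (N : Set G) → (N : Set G) ⊆ V →
    N ≠ ⊥ → H ⊓ N ≠ ⊥

/-- A topological abelian group is *`p`-monothetic* if it is a finite cyclic `p`-group or
topologically isomorphic to a subgroup of the `p`-adic integers. -/
def IsPMonothetic (p : ℕ) (hp : p.Prime) (A : Type*) [AddCommGroup A] [TopologicalSpace A] :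
    Prop :=
  haveI : Fact p.Prime := ⟨hp⟩
  (∃ n : ℕ, Nonempty (A ≃+ ZMod (p ^ n))) ∨
    (∃ B : AddSubgroup ℤ_[p], ∃ e : A ≃+ B, Continuous e ∧ Continuous e.symm)

/-- A subgroup `H` is *weakly essential* if for every prime `p` it meets non-trivially every
infinite closed `p`-monothetic subgroup. -/
def IsWeaklyEssential {G : Type*} [AddCommGroup G] [TopologicalSpace G] (H : AddSubgroup G) :
    Prop :=
  ∀ (p : ℕ) (hp : p.Prime) (N : AddSubgroup G), IsClosed (N : Set G) →
    (N : Set G).Infinite → IsPMonothetic p hp N → H ⊓ N ≠ ⊥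

/-- `G[p]`, the subgroup of elements killed by `p`. -/
def pTorsion (G : Type*) [AddCommGroup G] (p : ℕ) : AddSubgroup G where
  carrier := {x | p • x = 0}
  zero_mem' := by simp
  add_mem' := by
    intro a b ha hb
    simp only [Set.mem_setOf_eq, smul_add] at *
    rw [ha, hb, add_zero]
  neg_mem' := by
    intro a ha
    simp only [Set.mem_setOf_eq, smul_neg] at *
    rw [ha, neg_zero]

/-- The socle `Soc(G)`: the subgroup generated by all `G[p]`, `p` prime. -/
def socle (G : Type*) [AddCommGroup G] : AddSubgroup G :=
  ⨆ p ∈ {q : ℕ | q.Prime}, pTorsion G p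

/-! If `V` witnesses that `G` is locally essential, a closed subgroup `N ⊆ f⁻¹(V)` either lies
in `ker f ⊆ f⁻¹(G)`, or its image `f(N)` is a non-trivial subgroup of `L` inside `V`, closed
because `f` is a closed map, so `f(N)` meets `G` and hence `N` meets `f⁻¹(G)`. For density, a
continuous surjection from a compact group onto a Hausdorff one is closed, hence a quotient map,
hence open, and preimages of dense sets under open maps are dense. -/

namespace AddSubgroup

variable {K L : Type*} [AddGroup K] [AddGroup L] {f : K →+ L} {G : AddSubgroup L}
  {N : AddSubgroup K}

theorem comap_inf_ne_bot_of_inf_map_ne_bot (h : G ⊓ N.map f ≠ ⊥) : G.comap f ⊓ N ≠ ⊥ := by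
  contrapose! h
  rw [eq_bot_iff] at h ⊢
  rintro _ ⟨hyG, x, hxN, rfl⟩
  have hx : x = 0 := mem_bot.mp (h ⟨hyG, hxN⟩)
  simp [hx]

theorem comap_inf_ne_bot_of_map_eq_bot (hN : N ≠ ⊥) (hmap : N.map f = ⊥) :
    G.comap f ⊓ N ≠ ⊥ := by
  rwa [inf_eq_right.mpr (((map_eq_bot_iff N).mp hmap).trans (ker_le_comap f G))]

end AddSubgroup

theorem IsLocallyEssential.comap {K L : Type*} [AddGroup K] [TopologicalSpace K] [AddGroup L]
    [TopologicalSpace L] {G : AddSubgroup L} (hG : IsLocallyEssential G) {f : K →+ L}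
    (hf : Continuous f) (hcl : IsClosedMap f) : IsLocallyEssential (G.comap f) := by
  obtain ⟨V, hV, hVess⟩ := hG
  refine ⟨f ⁻¹' V, hf.continuousAt.preimage_mem_nhds (by rwa [map_zero]), ?_⟩
  intro N hN hNV hN_ne
  by_cases hmap : N.map f = ⊥
  · exact AddSubgroup.comap_inf_ne_bot_of_map_eq_bot hN_ne hmap
  · refine AddSubgroup.comap_inf_ne_bot_of_inf_map_ne_bot (hVess _ (hcl _ hN) ?_ hmap)
    rintro _ ⟨x, hx, rfl⟩
    exact hNV hx

theorem locallyEssential_comap_general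
    (K L : Type u) [AddCommGroup K] [TopologicalSpace K] [IsTopologicalAddGroup K]
    [CompactSpace K] [AddCommGroup L] [TopologicalSpace L] [T2Space L]
    (f : K →+ L) (hf : Continuous f) (hsurj : Function.Surjective f)
    (G : AddSubgroup L) (hG : IsLocallyEssential G) :
    IsLocallyEssential (G.comap f) ∧
      (Dense (G : Set L) → Dense ((G.comap f : AddSubgroup K) : Set K)) := by
  have hcl : IsClosedMap f := hf.isClosedMap
  have hopen : IsOpenQuotientMap f :=
    AddMonoidHom.isOpenQuotientMap_of_isQuotientMap (hcl.isQuotientMap hf hsurj)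
  exact ⟨hG.comap hf hcl, hopen.dense_preimage_iff.mpr⟩

/-- If `f : K → L` is a continuous surjective homomorphism of compact Hausdorff abelian groups
and `G` is a locally essential subgroup of `L`, then `f⁻¹(G)` is locally essential in `K`;
moreover if `G` is dense in `L` then `f⁻¹(G)` is dense in `K`. -/
theorem locallyEssential_comap
    (K L : Type u) [AddCommGroup K] [TopologicalSpace K] [IsTopologicalAddGroup K]
    [CompactSpace K] [T2Space K]
    [AddCommGroup L] [TopologicalSpace L] [IsTopologicalAddGroup L]
    [CompactSpace L] [T2Space L]
    (f : K →+ L) (hf : Continuous f) (hsurj : Function.Surjective f)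
    (G : AddSubgroup L) (hG : IsLocallyEssential G) :
    IsLocallyEssential (G.comap f) ∧
      (Dense (G : Set L) → Dense ((G.comap f : AddSubgroup K) : Set K)) :=
  locallyEssential_comap_general K L f hf hsurj G hG
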